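/- If 𝔐 = (V, ⟨·,·⟩, R) is a Lorentzian model which is Jacobi–Tsankov, then R = 0. -/

import Mathlib

/-!
The Jacobi operators of any model are self-adjoint with `J(x) x = 0`. If they commute, then
`J(y) J(x) y = J(x) J(y) y = 0`, and since `J(x + s z)` is quadratic in `s`, this polarizes to
`J(x)² = 0`. Consequently `J(x) y` and `J(y) x` are null and orthogonal to each other. In
Lorentzian signature two such vectors are proportional; as `⟨J(x) y, x⟩ = 0` while
`⟨J(y) x, x⟩ = ⟨J(x) y, y⟩` by pair symmetry, the quadratic form `y ↦ ⟨J(x) y, y⟩` vanishes,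
so `J = 0`, and an algebraic curvature tensor with vanishing Jacobi operators is zero.
-/

def IsLorentzBasis {K V : Type*} [CommRing K] [AddCommGroup V] [Module K V] {n : ℕ}
    (B : V →ₗ[K] V →ₗ[K] K) (e : Module.Basis (Fin n) K V) : Prop :=
  ∀ i j, B (e i) (e j) = if i = j then (if (i : ℕ) = 0 then (-1 : K) else 1) else 0

namespace IsLorentzBasis

section CommRing

variable {K V : Type*} [CommRing K] [AddCommGroup V] [Module K V] {n : ℕ}
  {B : V →ₗ[K] V →ₗ[K] K} {e : Module.Basis (Fin n) K V}

theorem symm (he : IsLorentzBasis B e) (v w : V) : B v w = B w v := by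
  have hflip : B = B.flip := LinearMap.ext_basis e e fun i j => by
    rw [LinearMap.flip_apply, he, he]
    rcases eq_or_ne i j with rfl | hij
    · rfl
    · rw [if_neg hij, if_neg hij.symm]
  exact LinearMap.congr_fun₂ hflip v w

theorem apply_self (he : IsLorentzBasis B e) (v : V) :
    B v v = ∑ i : Fin n, (if (i : ℕ) = 0 then (-1 : K) else 1) * e.repr v i ^ 2 := by
  conv_lhs => rw [← e.sum_repr v]
  simp only [map_sum, map_smul, LinearMap.sum_apply, LinearMap.smul_apply, smul_eq_mul, he _ _,
    mul_ite, mul_zero, Finset.sum_ite_eq', Finset.mem_univ, if_true]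
  refine Finset.sum_congr rfl fun i _ => ?_
  split_ifs <;> ring

end CommRing

variable {K V : Type*} [Field K] [LinearOrder K] [IsStrictOrderedRing K]
  [AddCommGroup V] [Module K V] {n : ℕ} {B : V →ₗ[K] V →ₗ[K] K} {e : Module.Basis (Fin n) K V}

-- The vanishing of the time coordinate is phrased through `(i : ℕ) = 0` so that it is vacuous
-- for the empty basis.
theorem eq_zero_of_isotropic (he : IsLorentzBasis B e) {v : V} (hv : B v v = 0)
    (h₀ : ∀ i : Fin n, (i : ℕ) = 0 → e.repr v i = 0) : v = 0 := by
  have hterm : ∀ i ∈ Finset.univ,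
      0 ≤ (if ((i : Fin n) : ℕ) = 0 then (-1 : K) else 1) * e.repr v i ^ 2 := by
    intro i _
    by_cases hi : (i : ℕ) = 0
    · simp [h₀ i hi]
    · simp [hi, sq_nonneg]
  have hzero := (Finset.sum_eq_zero_iff_of_nonneg hterm).mp (he.apply_self v ▸ hv)
  refine e.repr.map_eq_zero_iff.mp (Finsupp.ext fun i => ?_)
  by_cases hi : (i : ℕ) = 0
  · exact h₀ i hi
  · simpa [hi] using hzero i (Finset.mem_univ i)

theorem eq_zero_or_exists_eq_smul (he : IsLorentzBasis B e) {v w : V} (hv : B v v = 0)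
    (hw : B w w = 0) (hvw : B v w = 0) : v = 0 ∨ ∃ c : K, w = c • v := by
  by_cases h₀ : ∀ i : Fin n, (i : ℕ) = 0 → e.repr v i = 0
  · exact Or.inl (he.eq_zero_of_isotropic hv h₀)
  push Not at h₀
  obtain ⟨i₀, hi₀, hv₀⟩ := h₀
  set c := e.repr w i₀ / e.repr v i₀
  refine Or.inr ⟨c, sub_eq_zero.mp (he.eq_zero_of_isotropic ?_ fun i hi => ?_)⟩
  · simp only [map_sub, map_smul, LinearMap.sub_apply, LinearMap.smul_apply, smul_eq_mul,
      he.symm w v, hv, hw, hvw]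
    ring
  · obtain rfl : i = i₀ := Fin.ext (hi.trans hi₀.symm)
    simp only [map_sub, map_smul, Finsupp.sub_apply, Finsupp.smul_apply, smul_eq_mul, c,
      div_mul_cancel₀ _ hv₀, sub_self]

end IsLorentzBasis

section CommRing

variable {K V : Type*} [CommRing K] [AddCommGroup V] [Module K V]
  {B : V →ₗ[K] V →ₗ[K] K} {R : V →ₗ[K] V →ₗ[K] V →ₗ[K] V →ₗ[K] K} {J : V → V →ₗ[K] V}

theorem jacobi_selfAdjoint (hR1 : ∀ x y z w, R x y z w = -R y x z w)
    (hR2 : ∀ x y z w, R x y z w = R z w x y) (hJ : ∀ x y z, B (J x y) z = R y x x z)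
    (x y z : V) : B (J x y) z = B (J x z) y := by
  linear_combination hJ x y z - hJ x z y + hR1 y x x z - hR2 x y x z - hR1 x z x y

end CommRing

section Field

variable {K V : Type*} [Field K] [CharZero K] [AddCommGroup V] [Module K V]
  {B : V →ₗ[K] V →ₗ[K] K} {R : V →ₗ[K] V →ₗ[K] V →ₗ[K] V →ₗ[K] K} {J : V → V →ₗ[K] V}

theorem curvature_eq_zero_of_forall_apply_self (hR1 : ∀ x y z w, R x y z w = -R y x z w)
    (hR3 : ∀ x y z w, R x y z w + R y z x w + R z x y w = 0) (h : ∀ x y w, R y x x w = 0)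
    (x y z w : V) : R x y z w = 0 := by
  have hswap : ∀ x y z, R y x z w = -R y z x w := fun x y z => by
    have hxz := h (x + z) y w
    simp only [map_add, LinearMap.add_apply, h x y w, h z y w] at hxz
    linear_combination hxz
  linear_combination (hR3 x y z w - hswap x y z + hR1 x y z w - hR1 z x y w + hswap z x y) / 3

theorem jacobi_apply_self (hBnd : ∀ x, (∀ y, B x y = 0) → x = 0)
    (hR1 : ∀ x y z w, R x y z w = -R y x z w) (hJ : ∀ x y z, B (J x y) z = R y x x z) (x : V) :
    J x x = 0 :=
  hBnd _ fun w => by linear_combination hJ x x w + hR1 x x x w / 2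

theorem jacobi_apply_jacobi_self (hBnd : ∀ x, (∀ y, B x y = 0) → x = 0)
    (hR1 : ∀ x y z w, R x y z w = -R y x z w) (hJ : ∀ x y z, B (J x y) z = R y x x z)
    (hJT : ∀ x y, J x ∘ₗ J y = J y ∘ₗ J x) (x y : V) : J y (J x y) = 0 := by
  rw [← LinearMap.comp_apply, hJT, LinearMap.comp_apply, jacobi_apply_self hBnd hR1 hJ, map_zero]

theorem jacobi_comp_self_eq_zero (hBnd : ∀ x, (∀ y, B x y = 0) → x = 0)
    (hR1 : ∀ x y z w, R x y z w = -R y x z w) (hJ : ∀ x y z, B (J x y) z = R y x x z)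
    (hJT : ∀ x y, J x ∘ₗ J y = J y ∘ₗ J x) (x : V) : J x ∘ₗ J x = 0 := by
  ext z
  -- `s ↦ R (J x z) (x + s • z) (x + s • z) w` is quadratic and vanishes for `s ≠ 0`,
  -- so its constant term does too.
  have key : ∀ s : K, s ≠ 0 → ∀ w, R (J x z) (x + s • z) (x + s • z) w = 0 := fun s hs w => by
    have h := jacobi_apply_jacobi_self hBnd hR1 hJ hJT x (x + s • z)
    rw [map_add, map_smul, jacobi_apply_self hBnd hR1 hJ, zero_add, map_smul, smul_eq_zero] at h
    rw [← hJ, h.resolve_left hs, map_zero, LinearMap.zero_apply]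
  refine hBnd _ fun w => ?_
  rw [LinearMap.comp_apply]
  have h₁ := key 1 one_ne_zero w
  have h₂ := key (-1) (neg_ne_zero.mpr one_ne_zero) w
  have h₃ := key 2 two_ne_zero w
  simp only [map_add, map_smul, LinearMap.add_apply, LinearMap.smul_apply, smul_eq_mul] at h₁ h₂ h₃
  linear_combination hJ x (J x z) w + (3 * h₁ + h₂ - h₃) / 3

theorem jacobi_apply_orthogonal_self (hBnd : ∀ x, (∀ y, B x y = 0) → x = 0)
    (hR1 : ∀ x y z w, R x y z w = -R y x z w) (hR2 : ∀ x y z w, R x y z w = R z w x y)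
    (hJ : ∀ x y z, B (J x y) z = R y x x z) (hJT : ∀ x y, J x ∘ₗ J y = J y ∘ₗ J x)
    (hnull : ∀ v w, B v v = 0 → B w w = 0 → B v w = 0 → v = 0 ∨ ∃ c : K, w = c • v)
    (x y : V) : B (J x y) y = 0 := by
  have hsa := jacobi_selfAdjoint hR1 hR2 hJ
  have hsq : ∀ x z, J x (J x z) = 0 := fun x =>
    LinearMap.congr_fun (jacobi_comp_self_eq_zero hBnd hR1 hJ hJT x)
  have hvv : B (J x y) (J x y) = 0 := by rw [hsa, hsq, map_zero, LinearMap.zero_apply]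
  have hww : B (J y x) (J y x) = 0 := by rw [hsa, hsq, map_zero, LinearMap.zero_apply]
  have hvw : B (J x y) (J y x) = 0 := by
    rw [hsa, jacobi_apply_jacobi_self hBnd hR1 hJ hJT, map_zero, LinearMap.zero_apply]
  have hvx : B (J x y) x = 0 := by linear_combination hJ x y x + hR2 y x x x + hR1 x x y x / 2
  rcases hnull _ _ hvv hww hvw with hv | ⟨c, hc⟩
  · rw [hv, map_zero, LinearMap.zero_apply]
  · rw [hJ, ← hR2, ← hJ, hc, map_smul, LinearMap.smul_apply, hvx, smul_zero]

theorem jacobi_eq_zero (hBnd : ∀ x, (∀ y, B x y = 0) → x = 0)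
    (hR1 : ∀ x y z w, R x y z w = -R y x z w) (hR2 : ∀ x y z w, R x y z w = R z w x y)
    (hJ : ∀ x y z, B (J x y) z = R y x x z) (hJT : ∀ x y, J x ∘ₗ J y = J y ∘ₗ J x)
    (hnull : ∀ v w, B v v = 0 → B w w = 0 → B v w = 0 → v = 0 ∨ ∃ c : K, w = c • v)
    (x y : V) : J x y = 0 := by
  refine hBnd _ fun z => ?_
  have hyz := jacobi_apply_orthogonal_self hBnd hR1 hR2 hJ hJT hnull x (y + z)
  simp only [map_add, LinearMap.add_apply,
    jacobi_apply_orthogonal_self hBnd hR1 hR2 hJ hJT hnull] at hyz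
  linear_combination (hyz - jacobi_selfAdjoint hR1 hR2 hJ x z y) / 2

end Field

theorem stmt5_general {V : Type*} [AddCommGroup V] [Module ℝ V]
    {n : ℕ}
    (B : V →ₗ[ℝ] V →ₗ[ℝ] ℝ)
    (hBnd : ∀ x, (∀ y, B x y = 0) → x = 0)
    (e : Module.Basis (Fin n) ℝ V)
    (hLor : ∀ i j, B (e i) (e j) =
      if i = j then (if (i : ℕ) = 0 then (-1 : ℝ) else 1) else 0)
    (R : V →ₗ[ℝ] V →ₗ[ℝ] V →ₗ[ℝ] V →ₗ[ℝ] ℝ)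
    (hR1 : ∀ x y z w, R x y z w = -R y x z w)
    (hR2 : ∀ x y z w, R x y z w = R z w x y)
    (hR3 : ∀ x y z w, R x y z w + R y z x w + R z x y w = 0)
    (J : V → V →ₗ[ℝ] V)
    (hJ : ∀ x y z, B (J x y) z = R y x x z)
    (hJT : ∀ x y, (J x) ∘ₗ (J y) = (J y) ∘ₗ (J x)) :
    ∀ x y z w, R x y z w = 0 := by
  have hJ0 := jacobi_eq_zero hBnd hR1 hR2 hJ hJT fun _ _ =>
    IsLorentzBasis.eq_zero_or_exists_eq_smul hLor
  refine curvature_eq_zero_of_forall_apply_self hR1 hR3 fun x y w => ?_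
  rw [← hJ, hJ0, map_zero, LinearMap.zero_apply]

/-- A Lorentzian Jacobi–Tsankov model has R = 0. -/
theorem stmt5 {V : Type*} [AddCommGroup V] [Module ℝ V] [FiniteDimensional ℝ V]
    {n : ℕ}
    (B : V →ₗ[ℝ] V →ₗ[ℝ] ℝ)
    (hBsymm : ∀ x y, B x y = B y x)
    (hBnd : ∀ x, (∀ y, B x y = 0) → x = 0)
    (e : Module.Basis (Fin n) ℝ V)
    (hLor : ∀ i j, B (e i) (e j) =
      if i = j then (if (i : ℕ) = 0 then (-1 : ℝ) else 1) else 0)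
    (R : V →ₗ[ℝ] V →ₗ[ℝ] V →ₗ[ℝ] V →ₗ[ℝ] ℝ)
    (hR1 : ∀ x y z w, R x y z w = -R y x z w)
    (hR2 : ∀ x y z w, R x y z w = R z w x y)
    (hR3 : ∀ x y z w, R x y z w + R y z x w + R z x y w = 0)
    (J : V → V →ₗ[ℝ] V)
    (hJ : ∀ x y z, B (J x y) z = R y x x z)
    (hJT : ∀ x y, (J x) ∘ₗ (J y) = (J y) ∘ₗ (J x)) :
    ∀ x y z w, R x y z w = 0 :=
  stmt5_general B hBnd e hLor R hR1 hR2 hR3 J hJ hJT
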